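/- Let Γ be a compact metric graph with a fixed loopless model G, and consider the polysimplicial complex structure on Γ_d indexed by the poset Ξ(G) of stable pairs of degree d over G. Then for every stable pair (G_2', D_2), every face F of the polysimplex Δ(G_2',D_2) is the image of exactly one face morphism Δ(G_1',D_1) → Δ(G_2',D_2) induced by an inequality (G_1',D_1) ⪯ (G_2',D_2): faces correspond bijectively to the edge contractions of G_2' over G together with pushforwards of D_2. -/
import Mathlib


/-- A stable pair of degree `d` over a finite graph `G` with vertex set `V`
and edge set `ι` (with endpoint maps `s t : ι → V`): a finite subdivision of
`G`, recorded by the number `k i` of exceptional vertices placed in the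
interior of each edge `i`, together with an effective divisor of degree `d`
supported on the vertices of the subdivision (values `Dv` on the original
vertices and `De` on the exceptional vertices), which is positive at every
exceptional vertex. -/
structure StablePair (V ι : Type) [Fintype V] [Fintype ι] (s t : ι → V) (d : ℕ) where
  k : ι → ℕ
  Dv : V → ℕ
  De : (i : ι) → Fin (k i) → ℕ
  pos : ∀ i j, 0 < De i j
  deg : (∑ v, Dv v) + (∑ i, ∑ j, De i j) = d

/-- The `j`-th interior vertex of a subdivided edge with `m` exceptional
vertices, among all `m + 2` vertices of the corresponding path. -/
def inn {m : ℕ} (j : Fin m) : Fin (m + 2) := ⟨j.val + 1, by omega⟩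

/-- A subdivision map (edge contraction) `φ : G₂' → G₁'` over `G` between the
subdivisions underlying two stable pairs `P = (G₁',D₁)` and `Q = (G₂',D₂)`,
together with the condition `φ_* D₂ = D₁`: per edge of `G` it is a monotone
surjection of path vertices preserving the two endpoints, and the divisor of
`P` is the pushforward of the divisor of `Q`. -/
structure Contraction {V ι : Type} [Fintype V] [Fintype ι] [DecidableEq V] [DecidableEq ι]
    {s t : ι → V} {d : ℕ} (P Q : StablePair V ι s t d) where
  σ : ∀ i, Fin (Q.k i + 2) → Fin (P.k i + 2)
  mono : ∀ i, Monotone (σ i)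
  surj : ∀ i, Function.Surjective (σ i)
  h0 : ∀ i, σ i 0 = 0
  hlast : ∀ i, σ i (Fin.last _) = Fin.last _
  pushInt : ∀ i (j : Fin (P.k i)),
      P.De i j =
        ∑ j' ∈ Finset.univ.filter (fun j' : Fin (Q.k i) => σ i (inn j') = inn j), Q.De i j'
  pushV : ∀ v, P.Dv v = Q.Dv v
      + (∑ i ∈ Finset.univ.filter (fun i => s i = v),
          ∑ j' ∈ Finset.univ.filter (fun j' : Fin (Q.k i) => σ i (inn j') = 0), Q.De i j')
      + ∑ i ∈ Finset.univ.filter (fun i => t i = v),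
          ∑ j' ∈ Finset.univ.filter (fun j' : Fin (Q.k i) => σ i (inn j') = Fin.last _), Q.De i j'

namespace FaceAux

/-- The set of "jumps" of a path map. -/
def jumps {n m : ℕ} (f : Fin (n + 2) → Fin (m + 2)) : Finset (Fin (n + 1)) :=
  Finset.univ.filter (fun j => f j.castSucc ≠ f j.succ)

/-- Number of elements of `S` below `j`. -/
def cnt {n : ℕ} (S : Finset (Fin (n + 1))) (j : ℕ) : ℕ :=
  (S.filter (fun x => x.val < j)).card

lemma cnt_zero {n : ℕ} (S : Finset (Fin (n + 1))) : cnt S 0 = 0 := by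
  simp [cnt]

lemma cnt_succ {n : ℕ} (S : Finset (Fin (n + 1))) (j : Fin (n + 1)) :
    cnt S (j.val + 1) = cnt S j.val + (if j ∈ S then 1 else 0) := by
  classical
  unfold cnt
  have h : (S.filter (fun x => x.val < j.val + 1))
      = (S.filter (fun x => x.val < j.val)) ∪ (S.filter (fun x => x.val = j.val)) := by
    ext x
    simp only [Finset.mem_union, Finset.mem_filter]
    constructor
    · rintro ⟨hx, hlt⟩
      rcases Nat.lt_or_ge x.val j.val with h' | h'
      · exact Or.inl ⟨hx, h'⟩
      · exact Or.inr ⟨hx, by omega⟩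
    · rintro (⟨hx, h'⟩ | ⟨hx, h'⟩)
      · exact ⟨hx, by omega⟩
      · exact ⟨hx, by omega⟩
  have h2 : (S.filter (fun x => x.val = j.val)) = if j ∈ S then {j} else ∅ := by
    by_cases hj : j ∈ S
    · rw [if_pos hj]
      ext x
      simp only [Finset.mem_filter, Finset.mem_singleton]
      constructor
      · rintro ⟨_, hv⟩
        exact Fin.ext hv
      · rintro rfl
        exact ⟨hj, rfl⟩
    · rw [if_neg hj]
      ext x
      simp only [Finset.mem_filter, Finset.notMem_empty, iff_false, not_and]
      intro hx hv
      exact hj ((Fin.ext hv : x = j) ▸ hx)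
  rw [h, Finset.card_union_of_disjoint]
  · rw [h2]
    by_cases hj : j ∈ S <;> simp [hj]
  · rw [Finset.disjoint_left]
    rintro x hx1 hx2
    rw [Finset.mem_filter] at hx1 hx2
    omega

lemma cnt_le_card {n : ℕ} (S : Finset (Fin (n + 1))) (j : ℕ) : cnt S j ≤ S.card :=
  Finset.card_le_card (Finset.filter_subset _ _)

lemma cnt_top {n : ℕ} (S : Finset (Fin (n + 1))) : cnt S (n + 1) = S.card := by
  unfold cnt
  congr 1
  apply Finset.filter_true_of_mem
  intro x _
  exact x.isLt

/-- Monotone surjections jump by at most one. -/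
lemma step_le {n m : ℕ} {f : Fin (n + 2) → Fin (m + 2)} (hm : Monotone f)
    (hs : Function.Surjective f) (j : Fin (n + 1)) :
    (f j.succ).val ≤ (f j.castSucc).val + 1 := by
  by_contra h
  push_neg at h
  have hc : (f j.castSucc).val + 1 < m + 2 := by
    have := (f j.succ).isLt; omega
  obtain ⟨x, hx⟩ := hs ⟨(f j.castSucc).val + 1, hc⟩
  rcases le_or_gt x j.castSucc with hle | hlt
  · have h2 := hm hle
    rw [hx] at h2
    have h3 : (f j.castSucc).val + 1 ≤ (f j.castSucc).val := h2
    omega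
  · have hge : j.succ ≤ x := by
      rw [Fin.le_def]
      rw [Fin.lt_def] at hlt
      have hv : j.succ.val = j.castSucc.val + 1 := rfl
      omega
    have h2 := hm hge
    rw [hx] at h2
    have h3 : (f j.succ).val ≤ (f j.castSucc).val + 1 := h2
    omega

/-- The value of a monotone surjection fixing `0` is the number of jumps below. -/
lemma val_eq_cnt {n m : ℕ} {f : Fin (n + 2) → Fin (m + 2)} (hm : Monotone f)
    (hs : Function.Surjective f) (h0 : f 0 = 0) (j : Fin (n + 2)) :
    (f j).val = cnt (jumps f) j.val := by
  induction j using Fin.induction with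
  | zero => simp [h0, cnt_zero]
  | succ j ih =>
    have hstep := step_le hm hs j
    have hle := Fin.le_def.mp (hm (Fin.castSucc_le_succ j))
    have hj : j.succ.val = j.val + 1 := rfl
    have hjc : j.castSucc.val = j.val := rfl
    rw [hjc] at ih
    rw [hj, cnt_succ]
    have hmem : j ∈ jumps f ↔ f j.castSucc ≠ f j.succ := by simp [jumps]
    by_cases hne : f j.castSucc = f j.succ
    · rw [if_neg (by simp [hmem, hne]), ← ih, hne]
      omega
    · have hv : (f j.castSucc).val ≠ (f j.succ).val := fun hh => hne (Fin.ext hh)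
      rw [if_pos (hmem.mpr hne), ← ih]
      omega

lemma card_jumps {n m : ℕ} {f : Fin (n + 2) → Fin (m + 2)} (hm : Monotone f)
    (hs : Function.Surjective f) (h0 : f 0 = 0)
    (hl : f (Fin.last _) = Fin.last _) : (jumps f).card = m + 1 := by
  have h := val_eq_cnt hm hs h0 (Fin.last (n + 1))
  rw [hl] at h
  have h1 : (Fin.last (m + 1)).val = m + 1 := rfl
  have h2 : (Fin.last (n + 1)).val = n + 1 := rfl
  rw [h1, h2, cnt_top] at h
  omega

lemma eq_of_jumps_eq {n m : ℕ} {f g : Fin (n + 2) → Fin (m + 2)}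
    (hmf : Monotone f) (hsf : Function.Surjective f) (h0f : f 0 = 0)
    (hmg : Monotone g) (hsg : Function.Surjective g) (h0g : g 0 = 0)
    (h : jumps f = jumps g) : f = g := by
  funext j
  apply Fin.ext
  rw [val_eq_cnt hmf hsf h0f, val_eq_cnt hmg hsg h0g, h]

/-- Discrete intermediate value: monotone, steps ≤ 1, hits both ends ⇒ surjective. -/
lemma surj_of_steps {n m : ℕ} {f : Fin (n + 2) → Fin (m + 2)} (hm : Monotone f)
    (h0 : f 0 = 0) (hl : f (Fin.last _) = Fin.last _)
    (hstep : ∀ j : Fin (n + 1), (f j.succ).val ≤ (f j.castSucc).val + 1) :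
    Function.Surjective f := by
  classical
  intro c
  have hne : (Finset.univ.filter (fun j : Fin (n + 2) => (f j).val ≤ c.val)).Nonempty :=
    ⟨0, by simp [h0]⟩
  obtain ⟨j0, hj0mem, hj0max⟩ :
      ∃ j0 ∈ Finset.univ.filter (fun j : Fin (n + 2) => (f j).val ≤ c.val),
        ∀ x ∈ Finset.univ.filter (fun j : Fin (n + 2) => (f j).val ≤ c.val), x ≤ j0 :=
    ⟨_, Finset.max'_mem _ hne, fun x hx => Finset.le_max' _ x hx⟩
  rw [Finset.mem_filter] at hj0mem
  have hj0 := hj0mem.2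
  by_cases hlast : j0.val = n + 1
  · refine ⟨j0, Fin.ext ?_⟩
    have hj0e : j0 = Fin.last (n + 1) := Fin.ext hlast
    have hfl : (f j0).val = m + 1 := by rw [hj0e, hl]; rfl
    have hcl : c.val ≤ m + 1 := by have := c.isLt; omega
    omega
  · have hlt : j0.val < n + 1 := by have := j0.isLt; omega
    set jj : Fin (n + 1) := ⟨j0.val, hlt⟩ with hjj
    have hcs : jj.castSucc = j0 := Fin.ext rfl
    have hgt : c.val < (f jj.succ).val := by
      by_contra hh
      push_neg at hh
      have hmem : jj.succ ∈ Finset.univ.filter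
          (fun j : Fin (n + 2) => (f j).val ≤ c.val) :=
        Finset.mem_filter.mpr ⟨Finset.mem_univ _, hh⟩
      have hle := hj0max _ hmem
      rw [Fin.le_def] at hle
      have hv : jj.succ.val = j0.val + 1 := rfl
      omega
    have hst := hstep jj
    rw [hcs] at hst
    refine ⟨j0, Fin.ext ?_⟩
    omega

/-- The monotone surjection associated to a set of surviving segments. -/
def mkσ {n : ℕ} (S : Finset (Fin (n + 1))) (j : Fin (n + 2)) : Fin (S.card - 1 + 2) :=
  ⟨cnt S j.val, by have := cnt_le_card S j.val; omega⟩

lemma mkσ_mono {n : ℕ} (S : Finset (Fin (n + 1))) : Monotone (mkσ S) := by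
  intro a b hab
  rw [Fin.le_def]
  apply Finset.card_le_card
  intro x hx
  rw [Finset.mem_filter] at *
  rw [Fin.le_def] at hab
  exact ⟨hx.1, by omega⟩

lemma mkσ_zero {n : ℕ} (S : Finset (Fin (n + 1))) : mkσ S 0 = 0 := by
  apply Fin.ext
  simp [mkσ, cnt_zero]

lemma mkσ_last {n : ℕ} (S : Finset (Fin (n + 1))) (hS : S.Nonempty) :
    mkσ S (Fin.last _) = Fin.last _ := by
  apply Fin.ext
  have hc : 1 ≤ S.card := Finset.card_pos.mpr hS
  have h1 : (Fin.last (n + 1)).val = n + 1 := rfl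
  show cnt S (Fin.last (n + 1)).val = (Fin.last (S.card - 1 + 1)).val
  rw [h1, cnt_top]
  show S.card = S.card - 1 + 1
  omega

lemma mkσ_step {n : ℕ} (S : Finset (Fin (n + 1))) (j : Fin (n + 1)) :
    (mkσ S j.succ).val ≤ (mkσ S j.castSucc).val + 1 := by
  show cnt S j.succ.val ≤ cnt S j.castSucc.val + 1
  have h1 : j.succ.val = j.val + 1 := rfl
  have h2 : j.castSucc.val = j.val := rfl
  rw [h1, h2, cnt_succ]
  split <;> omega

lemma mkσ_surj {n : ℕ} (S : Finset (Fin (n + 1))) (hS : S.Nonempty) :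
    Function.Surjective (mkσ S) :=
  surj_of_steps (mkσ_mono S) (mkσ_zero S) (mkσ_last S hS) (mkσ_step S)

lemma jumps_mkσ {n : ℕ} (S : Finset (Fin (n + 1))) : jumps (mkσ S) = S := by
  ext j
  simp only [jumps, Finset.mem_filter, Finset.mem_univ, true_and]
  have h1 : (mkσ S j.succ).val = cnt S (j.val + 1) := rfl
  have h2 : (mkσ S j.castSucc).val = cnt S j.val := rfl
  constructor
  · intro hne
    by_contra hj
    apply hne
    apply Fin.ext
    rw [h1, h2, cnt_succ, if_neg hj]
    omega
  · intro hj hne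
    have := congrArg Fin.val hne
    rw [h1, h2, cnt_succ, if_pos hj] at this
    omega

/-- There is an interior preimage of each interior vertex. -/
lemma exists_inn_preimage {n m : ℕ} {f : Fin (n + 2) → Fin (m + 2)}
    (hs : Function.Surjective f) (h0 : f 0 = 0) (hl : f (Fin.last _) = Fin.last _)
    (j : Fin m) : ∃ j' : Fin n, f (inn j') = inn j := by
  obtain ⟨x, hx⟩ := hs (inn j)
  have hxv : x.val ≠ 0 := by
    intro hh
    have : x = 0 := Fin.ext hh
    rw [this, h0] at hx
    have := congrArg Fin.val hx
    simp [inn] at this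
  have hxl : x.val ≠ n + 1 := by
    intro hh
    have : x = Fin.last (n + 1) := Fin.ext hh
    rw [this, hl] at hx
    have := congrArg Fin.val hx
    have hjv : (inn j).val = j.val + 1 := rfl
    have hlv : (Fin.last (m + 1)).val = m + 1 := rfl
    rw [hjv, hlv] at this
    have := j.isLt
    omega
  have hxlt := x.isLt
  refine ⟨⟨x.val - 1, by omega⟩, ?_⟩
  have : inn (⟨x.val - 1, by omega⟩ : Fin n) = x := by
    apply Fin.ext
    show x.val - 1 + 1 = x.val
    omega
  rw [this, hx]

/-- Splitting a sum over `Fin (k+2)` into endpoints and interior. -/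
lemma sum_fin_split {k : ℕ} (f : Fin (k + 2) → ℕ) :
    ∑ c, f c = f 0 + (∑ j : Fin k, f (inn j)) + f (Fin.last (k + 1)) := by
  rw [Fin.sum_univ_succ, Fin.sum_univ_castSucc]
  have h1 : ∀ j : Fin k, (j.castSucc).succ = inn j := by
    intro j
    apply Fin.ext
    rfl
  have h2 : (Fin.last k).succ = Fin.last (k + 1) := by
    apply Fin.ext
    rfl
  simp only [h1, h2]
  ring

/-- Per-edge mass decomposition according to the fibers of a map to `Fin (kP+2)`. -/
lemma edge_sum {nQ kP : ℕ} (g : Fin nQ → Fin (kP + 2)) (w : Fin nQ → ℕ) :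
    ∑ j', w j' =
      (∑ j' ∈ Finset.univ.filter (fun j' => g j' = 0), w j')
      + (∑ j : Fin kP, ∑ j' ∈ Finset.univ.filter (fun j' => g j' = inn j), w j')
      + ∑ j' ∈ Finset.univ.filter (fun j' => g j' = Fin.last (kP + 1)), w j' := by
  classical
  rw [← Finset.sum_fiberwise Finset.univ g w]
  exact sum_fin_split (fun c => ∑ j' ∈ Finset.univ.filter (fun j' => g j' = c), w j')

end FaceAux

open FaceAux in
/-- Faces of the polysimplex `Δ(G₂',D₂)` of a stable pair `Q = (G₂',D₂)` are
products, over the edges `i` of `G`, of faces of the simplices `Δ(k_i,|e_i|)`,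
i.e. they are given by choosing, for each edge, the nonempty set of surviving
segments (coordinates not set to zero).  The theorem: every face of
`Δ(G₂',D₂)` is the image of exactly one face morphism
`Δ(G₁',D₁) → Δ(G₂',D₂)` induced by an inequality `(G₁',D₁) ⪯ (G₂',D₂)`;
faces correspond bijectively to edge contractions of `G₂'` over `G` together
with the pushforward of `D₂`.  Formally, the map sending a pair of a stable
pair `P` and a contraction `Q → P` to the family of sets of surviving
segments is a bijection onto the set of faces. -/
theorem faces_correspond_to_contractions (V ι : Type) [Fintype V] [Fintype ι]
    [DecidableEq V] [DecidableEq ι] (s t : ι → V) (hloopless : ∀ i, s i ≠ t i) (d : ℕ)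
    (Q : StablePair V ι s t d) :
    Set.BijOn
      (fun pc : Σ P : StablePair V ι s t d, Contraction P Q =>
        (fun i => Finset.univ.filter
          (fun j : Fin (Q.k i + 1) => pc.2.σ i j.castSucc ≠ pc.2.σ i j.succ)))
      Set.univ
      {F : ∀ i, Finset (Fin (Q.k i + 1)) | ∀ i, (F i).Nonempty} := by
  classical
  refine ⟨?_, ?_, ?_⟩
  · -- MapsTo
    rintro ⟨P, c⟩ -
    intro i
    show (jumps (c.σ i)).Nonempty
    rw [← Finset.card_pos, card_jumps (c.mono i) (c.surj i) (c.h0 i) (c.hlast i)]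
    omega
  · -- InjOn
    rintro ⟨P₁, c₁⟩ - ⟨P₂, c₂⟩ - h
    have hJ : ∀ i, jumps (c₁.σ i) = jumps (c₂.σ i) := fun i => congrFun h i
    have hk : P₁.k = P₂.k := by
      funext i
      have h1 := card_jumps (c₁.mono i) (c₁.surj i) (c₁.h0 i) (c₁.hlast i)
      have h2 := card_jumps (c₂.mono i) (c₂.surj i) (c₂.h0 i) (c₂.hlast i)
      rw [hJ i] at h1
      omega
    obtain ⟨k₁, Dv₁, De₁, pos₁, deg₁⟩ := P₁
    obtain ⟨k₂, Dv₂, De₂, pos₂, deg₂⟩ := P₂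
    obtain rfl : k₁ = k₂ := hk
    have hσ : c₁.σ = c₂.σ := by
      funext i
      exact eq_of_jumps_eq (c₁.mono i) (c₁.surj i) (c₁.h0 i)
        (c₂.mono i) (c₂.surj i) (c₂.h0 i) (hJ i)
    obtain ⟨σ₁, mono₁, surj₁, h0₁, hl₁, pi₁, pv₁⟩ := c₁
    obtain ⟨σ₂, mono₂, surj₂, h0₂, hl₂, pi₂, pv₂⟩ := c₂
    have hσ' : σ₁ = σ₂ := hσ
    subst hσ'
    have hDe : De₁ = De₂ := by
      funext i j
      exact (pi₁ i j).trans (pi₂ i j).symm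
    have hDv : Dv₁ = Dv₂ := by
      funext v
      exact (pv₁ v).trans (pv₂ v).symm
    subst hDe
    subst hDv
    rfl
  · -- SurjOn
    rintro F hF
    have hF : ∀ i, (F i).Nonempty := hF
    have hcard : ∀ i, (F i).card = (F i).card - 1 + 1 := fun i => by
      have := Finset.card_pos.mpr (hF i)
      omega
    -- the stable pair
    refine ⟨⟨⟨fun i => (F i).card - 1,
      fun v => Q.Dv v
        + (∑ i ∈ Finset.univ.filter (fun i => s i = v),
            ∑ j' ∈ Finset.univ.filter (fun j' : Fin (Q.k i) => mkσ (F i) (inn j') = 0),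
              Q.De i j')
        + ∑ i ∈ Finset.univ.filter (fun i => t i = v),
            ∑ j' ∈ Finset.univ.filter
              (fun j' : Fin (Q.k i) => mkσ (F i) (inn j') = Fin.last _), Q.De i j',
      fun i j => ∑ j' ∈ Finset.univ.filter
          (fun j' : Fin (Q.k i) => mkσ (F i) (inn j') = inn j), Q.De i j',
      ?_, ?_⟩,
      ⟨fun i => mkσ (F i), fun i => mkσ_mono (F i), fun i => mkσ_surj (F i) (hF i),
        fun i => mkσ_zero (F i), fun i => mkσ_last (F i) (hF i),
        fun i j => rfl, fun v => rfl⟩⟩, trivial, ?_⟩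
    · -- pos
      intro i j
      beta_reduce
      obtain ⟨j', hj'⟩ := exists_inn_preimage (mkσ_surj (F i) (hF i)) (mkσ_zero (F i))
        (mkσ_last (F i) (hF i)) j
      apply Finset.sum_pos'
      · intro x _; exact Nat.zero_le _
      · exact ⟨j', Finset.mem_filter.mpr ⟨Finset.mem_univ _, hj'⟩, Q.pos i j'⟩
    · -- deg
      beta_reduce
      rw [Finset.sum_add_distrib, Finset.sum_add_distrib,
        Finset.sum_fiberwise Finset.univ s, Finset.sum_fiberwise Finset.univ t]
      have hedge : ∀ i : ι,
          (∑ j' ∈ Finset.univ.filter (fun j' : Fin (Q.k i) => mkσ (F i) (inn j') = 0),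
            Q.De i j')
          + (∑ j : Fin ((F i).card - 1), ∑ j' ∈ Finset.univ.filter
              (fun j' : Fin (Q.k i) => mkσ (F i) (inn j') = inn j), Q.De i j')
          + ∑ j' ∈ Finset.univ.filter
              (fun j' : Fin (Q.k i) => mkσ (F i) (inn j') = Fin.last _), Q.De i j'
          = ∑ j', Q.De i j' :=
        fun i => (edge_sum (fun j' : Fin (Q.k i) => mkσ (F i) (inn j')) (Q.De i)).symm
      have := Q.deg
      calc (∑ v, Q.Dv v)
            + (∑ i, ∑ j' ∈ Finset.univ.filter
                (fun j' : Fin (Q.k i) => mkσ (F i) (inn j') = 0), Q.De i j')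
            + (∑ i, ∑ j' ∈ Finset.univ.filter
                (fun j' : Fin (Q.k i) => mkσ (F i) (inn j') = Fin.last _), Q.De i j')
            + ∑ i, ∑ j : Fin ((F i).card - 1), ∑ j' ∈ Finset.univ.filter
                (fun j' : Fin (Q.k i) => mkσ (F i) (inn j') = inn j), Q.De i j'
          = (∑ v, Q.Dv v) + ∑ i, ((∑ j' ∈ Finset.univ.filter
                (fun j' : Fin (Q.k i) => mkσ (F i) (inn j') = 0), Q.De i j')
              + (∑ j : Fin ((F i).card - 1), ∑ j' ∈ Finset.univ.filter
                  (fun j' : Fin (Q.k i) => mkσ (F i) (inn j') = inn j), Q.De i j')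
              + ∑ j' ∈ Finset.univ.filter
                  (fun j' : Fin (Q.k i) => mkσ (F i) (inn j') = Fin.last _), Q.De i j') := by
            rw [Finset.sum_add_distrib, Finset.sum_add_distrib]
            ring
        _ = (∑ v, Q.Dv v) + ∑ i, ∑ j', Q.De i j' := by
            rw [Finset.sum_congr rfl (fun i _ => hedge i)]
        _ = d := Q.deg
    · -- image is F
      funext i
      show jumps (mkσ (F i)) = F i
      exact jumps_mkσ (F i)
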